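/- For all natural numbers r, s, r′, s′, and all a ∈ B_{r,s} and b ∈ B_{r′,s′}, the product a⋆ b lies in B_{s + max(r′−r, 0), s′ + max(r−r′, 0)}. -/
import Mathlib


open scoped ComplexOrder

noncomputable section

/-- The product `S_{μ₁} ⋯ S_{μ_p}` along a word `μ` (with `S_μ = 1` for the empty word). -/
def wordProd {A : Type*} [Monoid A] {n : ℕ} (S : Fin n → A) (μ : List (Fin n)) : A :=
  (μ.map S).prod

/-- `B_{r,s} = Span { S_μ S_ν⋆ : |μ| = r, |ν| = s }`;  `F_k = B_{k,k}`. -/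
def Bspan {A : Type*} [Ring A] [Algebra ℂ A] [StarRing A] {n : ℕ}
    (S : Fin n → A) (r s : ℕ) : Submodule ℂ A :=
  Submodule.span ℂ
    {a | ∃ μ ν : List (Fin n), μ.length = r ∧ ν.length = s ∧
        a = wordProd S μ * star (wordProd S ν)}

/-- `W_0 = ℂ·1` and, for `k ≥ 1`,
`W_k = {x ∈ F_k : φ(y⋆ x) = 0 for all y ∈ F_{k-1}}`. -/
def Wsub {A : Type*} [NormedRing A] [NormedAlgebra ℂ A] [StarRing A] {n : ℕ}
    (φ : A →L[ℂ] ℂ) (S : Fin n → A) : ℕ → Submodule ℂ A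
  | 0 => Submodule.span ℂ {(1 : A)}
  | (k + 1) =>
      Bspan S (k + 1) (k + 1) ⊓
        ⨅ y ∈ Bspan S k k,
          LinearMap.ker ((φ : A →ₗ[ℂ] ℂ) ∘ₗ LinearMap.mulLeft ℂ (star y))

/-- `V¹_{k,r} = Span { S_μ x : |μ| = r, x ∈ W_k }`. -/
def V1 {A : Type*} [NormedRing A] [NormedAlgebra ℂ A] [StarRing A] {n : ℕ}
    (φ : A →L[ℂ] ℂ) (S : Fin n → A) (k r : ℕ) : Submodule ℂ A :=
  Submodule.span ℂ
    {a | ∃ μ : List (Fin n), ∃ x : A, μ.length = r ∧ x ∈ Wsub φ S k ∧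
        a = wordProd S μ * x}

/-- `V²_{k,r} = Span { x S_γ⋆ : |γ| = r, x ∈ W_k }`. -/
def V2 {A : Type*} [NormedRing A] [NormedAlgebra ℂ A] [StarRing A] {n : ℕ}
    (φ : A →L[ℂ] ℂ) (S : Fin n → A) (k r : ℕ) : Submodule ℂ A :=
  Submodule.span ℂ
    {a | ∃ γ : List (Fin n), ∃ x : A, γ.length = r ∧ x ∈ Wsub φ S k ∧
        a = x * star (wordProd S γ)}


set_option linter.unusedSectionVars false

section CuntzAux

variable {A : Type*} [NormedRing A] [StarRing A] [CStarRing A]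
    [NormedAlgebra ℂ A] [StarModule ℂ A] [CompleteSpace A]
    {n : ℕ}

theorem wordProd_cons (S : Fin n → A) (i : Fin n) (μ : List (Fin n)) :
    wordProd S (i :: μ) = S i * wordProd S μ := by
  simp [wordProd]

theorem wordProd_append (S : Fin n → A) (μ ν : List (Fin n)) :
    wordProd S (μ ++ ν) = wordProd S μ * wordProd S ν := by
  simp [wordProd]

theorem proj_orth (S : Fin n → A)
    (hS1 : ∀ i, star (S i) * S i = 1)
    (hS2 : ∑ j, S j * star (S j) = 1) :
    ∀ i j : Fin n, i ≠ j → (S i * star (S i)) * (S j * star (S j)) = 0 := by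
  letI : CStarAlgebra A := {}
  letI := CStarAlgebra.spectralOrder A
  haveI := CStarAlgebra.spectralOrderedRing A
  intro i j hij
  set P : Fin n → A := fun k => S k * star (S k) with hP
  have hproj : ∀ k, P k * P k = P k := by
    intro k
    simp only [hP]
    rw [mul_assoc, ← mul_assoc (star (S k)), hS1, one_mul]
  have hstar : ∀ k, star (P k) = P k := by intro k; simp [hP]
  have hterm : ∀ k, P i * P k * P i = star (P k * P i) * (P k * P i) := by
    intro k
    rw [star_mul, hstar, hstar,
      show (P i * P k) * (P k * P i) = P i * (P k * P k) * P i by noncomm_ring,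
      hproj]
  have hsum : ∑ k, P i * P k * P i = P i := by
    rw [← Finset.sum_mul, ← Finset.mul_sum, hS2, mul_one, hproj]
  have hzero : ∑ k ∈ Finset.univ.erase i, P i * P k * P i = 0 := by
    have h1 : P i * P i * P i + ∑ k ∈ Finset.univ.erase i, P i * P k * P i
        = P i :=
      (Finset.add_sum_erase Finset.univ (fun k => P i * P k * P i)
        (Finset.mem_univ i)).trans hsum
    rw [hproj, hproj] at h1
    exact add_eq_left.mp h1
  have hnn : ∀ k ∈ Finset.univ.erase i, 0 ≤ P i * P k * P i := by
    intro k _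
    rw [hterm]
    exact star_mul_self_nonneg _
  have hj0 : P i * P j * P i = 0 :=
    (Finset.sum_eq_zero_iff_of_nonneg hnn).mp hzero j
      (Finset.mem_erase.mpr ⟨fun h => hij h.symm, Finset.mem_univ j⟩)
  have hPjPi : P j * P i = 0 := by
    have : star (P j * P i) * (P j * P i) = 0 := by rw [← hterm, hj0]
    exact (CStarRing.star_mul_self_eq_zero_iff _).mp this
  have hPiPj : P i * P j = 0 := by
    have := congrArg star hPjPi
    rwa [star_mul, hstar, hstar, star_zero] at this
  exact hPiPj

theorem star_orth (S : Fin n → A)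
    (hS1 : ∀ i, star (S i) * S i = 1)
    (hS2 : ∑ j, S j * star (S j) = 1) :
    ∀ i j : Fin n, i ≠ j → star (S i) * S j = 0 := by
  intro i j hij
  have h := proj_orth S hS1 hS2 i j hij
  have : star (S i) * S j
      = star (S i) * ((S i * star (S i)) * (S j * star (S j))) * S j := by
    have e1 : star (S i) * (S i * star (S i)) = star (S i) := by
      rw [← mul_assoc, hS1, one_mul]
    have e2 : star (S j) * S j = 1 := hS1 j
    calc star (S i) * S j = star (S i) * S j * 1 := by rw [mul_one]
      _ = star (S i) * S j * (star (S j) * S j) := by rw [e2]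
      _ = (star (S i) * (S i * star (S i))) * S j * (star (S j) * S j) := by rw [e1]
      _ = star (S i) * ((S i * star (S i)) * (S j * star (S j))) * S j := by
          noncomm_ring
  rw [this, h, mul_zero, zero_mul]

theorem cancel_tri (S : Fin n → A)
    (hS1 : ∀ i, star (S i) * S i = 1)
    (hS2 : ∑ j, S j * star (S j) = 1) :
    ∀ μ ν : List (Fin n),
      star (wordProd S μ) * wordProd S ν = 0 ∨
      (∃ τ : List (Fin n), ν = μ ++ τ ∧
        star (wordProd S μ) * wordProd S ν = wordProd S τ) ∨
      (∃ τ : List (Fin n), μ = ν ++ τ ∧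
        star (wordProd S μ) * wordProd S ν = star (wordProd S τ)) := by
  intro μ
  induction μ with
  | nil =>
    intro ν
    refine Or.inr (Or.inl ⟨ν, by simp, ?_⟩)
    simp [wordProd]
  | cons i μ' ih =>
    intro ν
    cases ν with
    | nil =>
      refine Or.inr (Or.inr ⟨i :: μ', by simp, ?_⟩)
      simp [wordProd]
    | cons j ν' =>
      rw [wordProd_cons, wordProd_cons, star_mul, mul_assoc,
        ← mul_assoc (star (S i))]
      by_cases hij : i = j
      · subst hij
        rw [hS1, one_mul]
        rcases ih ν' with h0 | ⟨τ, hτ, he⟩ | ⟨τ, hτ, he⟩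
        · exact Or.inl h0
        · exact Or.inr (Or.inl ⟨τ, by simp [hτ], he⟩)
        · exact Or.inr (Or.inr ⟨τ, by simp [hτ], he⟩)
      · left
        rw [star_orth S hS1 hS2 i j hij, zero_mul, mul_zero]

end CuntzAux

/-- For `a ∈ B_{r,s}` and `b ∈ B_{r',s'}` one has
`a⋆ b ∈ B_{s + max(r'-r,0), s' + max(r-r',0)}` (here `r' - r` denotes truncated
subtraction on `ℕ`, which equals `max(r'-r,0)`). -/
theorem star_mul_mem_Bspan
    {A : Type*} [NormedRing A] [StarRing A] [CStarRing A]
    [NormedAlgebra ℂ A] [StarModule ℂ A] [CompleteSpace A]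
    {n : ℕ} (hn : 2 ≤ n) (S : Fin n → A)
    (hS1 : ∀ i, star (S i) * S i = 1)
    (hS2 : ∑ j, S j * star (S j) = 1)
    (r s r' s' : ℕ)
    (a : A) (ha : a ∈ Bspan S r s) (b : A) (hb : b ∈ Bspan S r' s') :
    star a * b ∈ Bspan S (s + (r' - r)) (s' + (r - r')) := by
  induction ha using Submodule.span_induction with
  | zero => simpa using Submodule.zero_mem _
  | add x y hx hy ihx ihy =>
    rw [star_add, add_mul]; exact Submodule.add_mem _ ihx ihy
  | smul c x hx ih =>
    rw [star_smul, smul_mul_assoc]; exact Submodule.smul_mem _ _ ih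
  | mem x hx =>
    induction hb using Submodule.span_induction with
    | zero => simpa using Submodule.zero_mem _
    | add y z hy hz ihy ihz =>
      rw [mul_add]; exact Submodule.add_mem _ ihy ihz
    | smul c y hy ih =>
      rw [mul_smul_comm]; exact Submodule.smul_mem _ _ ih
    | mem y hy =>
      obtain ⟨μ, ν, hμ, hν, rfl⟩ := hx
      obtain ⟨μ', ν', hμ', hν', rfl⟩ := hy
      have key : star (wordProd S μ * star (wordProd S ν))
          * (wordProd S μ' * star (wordProd S ν'))
          = wordProd S ν * (star (wordProd S μ) * wordProd S μ')
            * star (wordProd S ν') := by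
        rw [star_mul, star_star]; noncomm_ring
      rcases cancel_tri S hS1 hS2 μ μ' with h0 | ⟨τ, hτ, he⟩ | ⟨τ, hτ, he⟩
      · rw [key, h0, mul_zero, zero_mul]
        exact Submodule.zero_mem _
      · rw [key, he, ← wordProd_append]
        apply Submodule.subset_span
        refine ⟨ν ++ τ, ν', ?_, ?_, rfl⟩
        · have : μ'.length = μ.length + τ.length := by rw [hτ]; simp
          simp only [List.length_append, hν]
          omega
        · have : μ'.length = μ.length + τ.length := by rw [hτ]; simp
          omega
      · rw [key, he, mul_assoc, ← star_mul, ← wordProd_append]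
        apply Submodule.subset_span
        refine ⟨ν, ν' ++ τ, ?_, ?_, rfl⟩
        · have : μ.length = μ'.length + τ.length := by rw [hτ]; simp
          omega
        · have : μ.length = μ'.length + τ.length := by rw [hτ]; simp
          simp only [List.length_append, hν']
          omega
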